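/- arXiv:1007.5285 — 3 statements merged into one kernel-verified Lean document; each statement's English description precedes it below -/
import Mathlib

section
/- Let R be a commutative ring and let f = ax² + bxy + cy² be a binary quadratic form over R with a, b, c generating the unit ideal of R. Then Spec R is covered by the basic open sets D(a), D(a+b+c), D(c), and on each of these open sets there is an invertible linear change of the variables x, y transforming f into a form whose x²-coefficient is a unit. -/
/-!
The three elements `a`, `a + b + c`, `c` are the values of `f` at the primitive vectors
`(1, 0)`, `(1, 1)`, `(0, 1)`, and they generate the same ideal as `a, b, c` since
`b = (a + b + c) - a - c`. A primitive vector is the first column of a matrix `g ∈ SL₂`, and the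
`x²`-coefficient of `f ∘ g` is the value of `f` at that column; over `R[1/s]` the value `s` is a
unit.
-/

theorem Ideal.span_triple_add_add {R : Type*} [CommRing R] (a b c : R) :
    Ideal.span {a, a + b + c, c} = Ideal.span {a, b, c} := by
  have mem {x y z w : R} (hw : w ∈ ({x, y, z} : Set R)) : w ∈ Ideal.span {x, y, z} :=
    Ideal.subset_span hw
  apply le_antisymm <;>
    simp only [Ideal.span_le, Set.insert_subset_iff, Set.singleton_subset_iff, SetLike.mem_coe]
  · exact ⟨mem (by simp), add_mem (add_mem (mem (by simp)) (mem (by simp))) (mem (by simp)),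
      mem (by simp)⟩
  · refine ⟨mem (by simp), ?_, mem (by simp)⟩
    have hb : a + b + c - a - c ∈ Ideal.span {a, a + b + c, c} :=
      sub_mem (sub_mem (mem (by simp)) (mem (by simp))) (mem (by simp))
    rwa [show a + b + c - a - c = b by ring] at hb

theorem exists_isCoprime_quadratic_eq {R : Type*} [CommRing R] {a b c s : R}
    (hs : s ∈ ({a, a + b + c, c} : Set R)) :
    ∃ x y : R, IsCoprime x y ∧ a * x ^ 2 + b * x * y + c * y ^ 2 = s := by
  rcases hs with rfl | rfl | rfl
  · exact ⟨1, 0, isCoprime_one_left, by ring⟩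
  · exact ⟨1, 1, isCoprime_one_left, by ring⟩
  · exact ⟨0, 1, isCoprime_one_right, by ring⟩

/-- If `f = ax² + bxy + cy²` has `(a, b, c) = R`, then `Spec R` is covered
by the basic opens `D(a)`, `D(a+b+c)`, `D(c)` (i.e. `(a, a+b+c, c) = R`), and over each
corresponding localization there is an invertible linear change of variables
`g ∈ GL₂` making the `x²`-coefficient of the transformed form,
namely `f(g₀₀, g₁₀) = a·g₀₀² + b·g₀₀·g₁₀ + c·g₁₀²`, a unit. -/
theorem primitive_form_unit_coefficient_cover (R : Type*) [CommRing R] (a b c : R)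
    (h : Ideal.span {a, b, c} = ⊤) :
    Ideal.span {a, a + b + c, c} = ⊤ ∧
    ∀ s : R, s ∈ ({a, a + b + c, c} : Set R) →
      ∃ g : GL (Fin 2) (Localization.Away s),
        IsUnit (algebraMap R (Localization.Away s) a * (g.val 0 0) ^ 2 +
          algebraMap R (Localization.Away s) b * (g.val 0 0) * (g.val 1 0) +
          algebraMap R (Localization.Away s) c * (g.val 1 0) ^ 2) := by
  refine ⟨(Ideal.span_triple_add_add a b c).trans h, fun s hs => ?_⟩
  obtain ⟨x, y, hxy, hfs⟩ := exists_isCoprime_quadratic_eq hs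
  obtain ⟨g, hg₀, hg₁⟩ := (hxy.map (algebraMap R (Localization.Away s))).exists_SL2_col 0
  refine ⟨g, ?_⟩
  have hs_unit :
      IsUnit (algebraMap R (Localization.Away s) (a * x ^ 2 + b * x * y + c * y ^ 2)) := by
    rw [hfs]
    exact IsLocalization.Away.algebraMap_isUnit s
  simpa [Matrix.SpecialLinearGroup.coe_GL_coe_matrix, hg₀, hg₁] using hs_unit
end

section
/- Let D be an integral domain with fraction field K, let C be a quadratic D-algebra (free of rank 2 as a D-module) with nonzero discriminant, and let M be a traceable C-module. Then M is isomorphic as a C-module to a full ideal of C, i.e., to a C-submodule I ⊆ C that is free of rank 2 as a D-module. -/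
/-!
Choose `m : M` for which `f : γ ↦ γ • m`, a `D`-linear map `C → M`, has nonzero determinant `d`.
Such an `m` exists: otherwise this determinant, a quadratic form in the coordinates of `m`,
vanishes identically, and by traceability the trace form of `C` is the trace form of the
matrices by which `C` acts on `M`, whose discriminant is then forced to vanish. The adjugate
yields `g : M → C` with `g ∘ f = d = f ∘ g`; as `f` is `C`-linear and injective, so is `g`, and
`M ≅ g(M)` is a full ideal.
-/

open Matrix Module

/-- `det [A₀ v | A₁ v]` is a binary quadratic form in `v`; its values at `e₀`, `e₁`, `e₀ + e₁`
determine its coefficients, and the discriminant of the trace form lies in the ideal they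
generate. -/
theorem Matrix.det_traceForm_eq_zero_of_det_mulVec_eq_zero {R : Type*} [CommRing R]
    (A : Fin 2 → Matrix (Fin 2) (Fin 2) R)
    (h : ∀ v : Fin 2 → R, (of fun i j => (A j *ᵥ v) i).det = 0) :
    (of fun i j => trace (A i * A j)).det = 0 := by
  have h₀ := h (Pi.single 0 1)
  have h₁ := h (Pi.single 1 1)
  have h₂ := h 1
  simp only [mulVec, dotProduct, Fin.isValue, Fin.sum_univ_two, Pi.single_eq_same, mul_one,
    ne_eq, one_ne_zero, not_false_eq_true, Pi.single_eq_of_ne, mul_zero, add_zero, det_fin_two,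
    of_apply, zero_ne_one, zero_add, Pi.one_apply, trace_fin_two, mul_apply] at h₀ h₁ h₂ ⊢
  set p := A 0 0 0
  set q := A 0 0 1
  set r := A 0 1 0
  set s := A 0 1 1
  set t := A 1 0 0
  set u := A 1 0 1
  set v := A 1 1 0
  set w := A 1 1 1
  linear_combination
    (2*p*u - 2*q*t - q*w + s*u - (p*w - q*v + r*u - s*t)) * h₀ +
    (p*v - r*t + 2*r*w - 2*s*v - (p*w - q*v + r*u - s*t)) * h₁ +
    (p*w - q*v + r*u - s*t) * h₂

namespace LinearMap

variable {R M₁ M₂ : Type*} [CommRing R] [AddCommGroup M₁] [Module R M₁]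
  [AddCommGroup M₂] [Module R M₂]

theorem exists_comp_eq_det_smul_id {ι : Type*} [Fintype ι] [DecidableEq ι]
    (b₁ : Basis ι R M₁) (b₂ : Basis ι R M₂) (f : M₁ →ₗ[R] M₂) :
    ∃ g : M₂ →ₗ[R] M₁, g ∘ₗ f = (toMatrix b₁ b₂ f).det • id ∧
      f ∘ₗ g = (toMatrix b₁ b₂ f).det • id := by
  refine ⟨toLin b₂ b₁ (toMatrix b₁ b₂ f).adjugate, ?_, ?_⟩
  · apply (toMatrix b₁ b₁).injective
    rw [toMatrix_comp b₁ b₂ b₁, toMatrix_toLin, adjugate_mul, map_smul, toMatrix_id]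
  · apply (toMatrix b₂ b₂).injective
    rw [toMatrix_comp b₂ b₁ b₂, toMatrix_toLin, mul_adjugate, map_smul, toMatrix_id]

theorem injective_of_comp_eq_smul_id [IsDomain R] [IsTorsionFree R M₁]
    (f : M₁ →ₗ[R] M₂) (g : M₂ →ₗ[R] M₁) {d : R} (hd : d ≠ 0) (h : g ∘ₗ f = d • id) :
    Function.Injective f :=
  Function.Injective.of_comp (f := g) <| by
    rw [← coe_comp, h]
    exact smul_right_injective M₁ hd

end LinearMap

section TraceableModule

variable {D C M : Type*} [CommRing D] [CommRing C] [Algebra D C]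
  [AddCommGroup M] [Module D M] [Module C M] [IsScalarTower D C M]

theorem toMatrix_toSpanSingleton_restrictScalars {ι κ : Type*} [Fintype ι] [DecidableEq ι]
    [Fintype κ] [DecidableEq κ] (bC : Basis ι D C) (bM : Basis κ D M) (m : M) :
    LinearMap.toMatrix bC bM ((LinearMap.toSpanSingleton C M m).restrictScalars D) =
      of fun i j =>
        (LinearMap.toMatrixAlgEquiv bM (Algebra.lsmul D D M (bC j)) *ᵥ bM.repr m) i := by
  ext i j
  simp [LinearMap.toMatrix_apply, LinearMap.toMatrixAlgEquiv, LinearMap.toMatrix_mulVec_repr]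

theorem traceMatrix_eq_trace_toMatrixAlgEquiv_mul {ι κ : Type*} [Fintype κ] [DecidableEq κ]
    (bC : ι → C) (bM : Basis κ D M)
    (htr : ∀ γ : C, LinearMap.trace D M ((LinearMap.lsmul C M γ).restrictScalars D) =
      LinearMap.trace D C (LinearMap.mulLeft D γ)) :
    Algebra.traceMatrix D bC = of fun i j =>
      trace (LinearMap.toMatrixAlgEquiv bM (Algebra.lsmul D D M (bC i)) *
        LinearMap.toMatrixAlgEquiv bM (Algebra.lsmul D D M (bC j))) := by
  ext i j
  rw [Algebra.traceMatrix_apply, Algebra.traceForm_apply, of_apply, ← map_mul, ← map_mul]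
  exact (htr _).symm.trans (LinearMap.trace_eq_matrix_trace D bM _)

theorem exists_det_toMatrix_toSpanSingleton_ne_zero
    (bC : Basis (Fin 2) D C) (hdisc : Algebra.discr D bC ≠ 0) (bM : Basis (Fin 2) D M)
    (htr : ∀ γ : C, LinearMap.trace D M ((LinearMap.lsmul C M γ).restrictScalars D) =
      LinearMap.trace D C (LinearMap.mulLeft D γ)) :
    ∃ m : M, (LinearMap.toMatrix bC bM ((LinearMap.toSpanSingleton C M m).restrictScalars D)).det
      ≠ 0 := by
  by_contra! h
  apply hdisc
  rw [Algebra.discr_def, traceMatrix_eq_trace_toMatrixAlgEquiv_mul bC bM htr]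
  refine det_traceForm_eq_zero_of_det_mulVec_eq_zero _ fun v => ?_
  simpa [toMatrix_toSpanSingleton_restrictScalars] using h (bM.equivFun.symm v)

theorem map_smul_of_comp_eq_smul_id {N : Type*} [AddCommGroup N] [Module D N] [Module C N]
    [IsScalarTower D C N] (f : N →ₗ[C] M) (hf : Function.Injective f) (g : M →ₗ[D] N) {d : D}
    (h : f.restrictScalars D ∘ₗ g = d • LinearMap.id) (γ : C) (x : M) :
    g (γ • x) = γ • g x := by
  have hfg (y : M) : f (g y) = d • y := LinearMap.congr_fun h y
  apply hf
  rw [hfg, map_smul, hfg, smul_comm]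

theorem exists_ideal_linearEquiv_of_injective {ι : Type*} (bM : Basis ι D M) (g : M →ₗ[C] C)
    (hg : Function.Injective g) :
    ∃ I : Ideal C, Nonempty (Basis ι D I) ∧ Nonempty (M ≃ₗ[C] I) :=
  ⟨LinearMap.range g, ⟨bM.map ((LinearEquiv.ofInjective g hg).restrictScalars D)⟩,
    ⟨LinearEquiv.ofInjective g hg⟩⟩

end TraceableModule

/-- Over an integral domain `D`, if `CC` is a quadratic `D`-algebra
(free of rank 2 over `D`) with nonzero discriminant and `M` is a traceable
`CC`-module (free of rank 2 over `D`, with each `γ : CC` having the same `D`-linear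
trace on `M` as on `CC`), then `M` is isomorphic as a `CC`-module to a full ideal of
`CC`, i.e. an ideal that is free of rank 2 as a `D`-module. -/
theorem traceable_module_realized_as_full_ideal
    (D CC : Type*) [CommRing D] [IsDomain D] [CommRing CC] [Algebra D CC]
    (bC : Module.Basis (Fin 2) D CC) (hdisc : Algebra.discr D ⇑bC ≠ 0)
    (M : Type*) [AddCommGroup M] [Module D M] [Module CC M] [IsScalarTower D CC M]
    (bM : Module.Basis (Fin 2) D M)
    (htr : ∀ γ : CC,
      LinearMap.trace D M ((LinearMap.lsmul CC M γ).restrictScalars D) =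
        LinearMap.trace D CC (LinearMap.mulLeft D γ)) :
    ∃ I : Ideal CC, Nonempty (Module.Basis (Fin 2) D I) ∧ Nonempty (M ≃ₗ[CC] I) := by
  obtain ⟨m, hdet⟩ := exists_det_toMatrix_toSpanSingleton_ne_zero bC hdisc bM htr
  set f := LinearMap.toSpanSingleton CC M m
  obtain ⟨g, hgf, hfg⟩ := LinearMap.exists_comp_eq_det_smul_id bC bM (f.restrictScalars D)
  have := bC.isTorsionFree
  have := bM.isTorsionFree
  have hf : Function.Injective f :=
    LinearMap.injective_of_comp_eq_smul_id (f.restrictScalars D) g hdet hgf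
  have hg : Function.Injective g :=
    LinearMap.injective_of_comp_eq_smul_id g (f.restrictScalars D) hdet hfg
  exact exists_ideal_linearEquiv_of_injective bM
    { g with map_smul' := map_smul_of_comp_eq_smul_id f hf g hfg } hg
end

section
/- The C-module M = ℤx ⊕ ℤy over C = ℤ[τ]/(τ²), with τ acting as zero on M, is a traceable C-module (corresponding to the zero binary quadratic form), but M is not isomorphic as a C-module to any ideal of C. -/
/-!
Every element of `C = ℤ[τ]/(τ²)` is `a + τ y` with `a : ℤ`. On `M` it acts as the scalar `a`; on
`C` it acts as `a` plus multiplication by the nilpotent `τ y`, whose trace vanishes. Both traces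
are therefore `2 a`. A `C`-linear embedding of `M` into `C` takes values in the annihilator of `τ`,
which is `ℤ τ`, and an injective `ℤ`-linear map `ℤ² → ℤ τ` is impossible for rank reasons.
-/

open Polynomial Module

namespace AdjoinRoot

theorem exists_eq_of_add_root_mul {R : Type*} [CommRing R] {f : R[X]} (z : AdjoinRoot f) :
    ∃ (a : R) (y : AdjoinRoot f), z = of f a + root f * y := by
  obtain ⟨p, rfl⟩ := mk_surjective z
  refine ⟨p.coeff 0, mk f p.divX, ?_⟩
  conv_lhs => rw [← X_mul_divX_add p, map_add, map_mul, mk_X, mk_C]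
  ring

variable {R : Type*} [CommRing R]

variable (R) in
theorem root_X_sq_sq : root (X ^ 2 : R[X]) ^ 2 = 0 := by
  rw [← mk_X, ← map_pow, mk_self]

theorem of_mul_root_X_sq_eq_zero_iff {a : R} : of (X ^ 2 : R[X]) a * root _ = 0 ↔ a = 0 := by
  refine ⟨fun h => ?_, fun h => by simp [h]⟩
  rw [← mk_C, ← mk_X, ← map_mul, mk_eq_zero, X_pow_dvd_iff] at h
  simpa using h 1 one_lt_two

theorem mem_span_root_of_root_mul_eq_zero {w : AdjoinRoot (X ^ 2 : R[X])}
    (h : root _ * w = 0) : w ∈ R ∙ root (X ^ 2 : R[X]) := by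
  obtain ⟨a, y, rfl⟩ := exists_eq_of_add_root_mul w
  obtain ⟨b, y', rfl⟩ := exists_eq_of_add_root_mul y
  have ha : a = 0 := by
    rw [← of_mul_root_X_sq_eq_zero_iff]
    linear_combination h - (of _ b + root (X ^ 2 : R[X]) * y') * root_X_sq_sq R
  refine Submodule.mem_span_singleton.mpr ⟨b, ?_⟩
  rw [ha, map_zero, Algebra.smul_def, algebraMap_eq]
  linear_combination (-y') * root_X_sq_sq R

instance (n : ℕ) : Free R (AdjoinRoot (X ^ n : R[X])) :=
  .of_basis (powerBasis' (monic_X_pow n)).basis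

theorem finrank_X_pow [StrongRankCondition R] (n : ℕ) :
    finrank R (AdjoinRoot (X ^ n : R[X])) = n := by
  have := nontrivial_of_invariantBasisNumber R
  rw [(powerBasis' (monic_X_pow n)).finrank, powerBasis'_dim, natDegree_X_pow]

theorem trace_of_add_root_mul [IsReduced R] [StrongRankCondition R] (a : R)
    (y : AdjoinRoot (X ^ 2 : R[X])) : Algebra.trace R _ (of _ a + root _ * y) = 2 * a := by
  have hnil : IsNilpotent (root (X ^ 2 : R[X]) * y) :=
    ⟨2, by rw [mul_pow, root_X_sq_sq, zero_mul]⟩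
  rw [map_add, (Algebra.isNilpotent_trace_of_isNilpotent hnil).eq_zero, ← algebraMap_eq,
    Algebra.trace_algebraMap, finrank_X_pow, add_zero, nsmul_eq_mul, Nat.cast_ofNat]

theorem finrank_le_one_of_injective_of_root_mul_eq_zero [StrongRankCondition R] {M : Type*}
    [AddCommGroup M] [Module R M] {g : M →ₗ[R] AdjoinRoot (X ^ 2 : R[X])}
    (hg : Function.Injective g) (h : ∀ m, root _ * g m = 0) : finrank R M ≤ 1 := by
  have hrange : LinearMap.range g ≤ R ∙ root (X ^ 2 : R[X]) := by
    rintro _ ⟨m, rfl⟩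
    exact mem_span_root_of_root_mul_eq_zero (h m)
  calc finrank R M = finrank R (LinearMap.range g) := (LinearMap.finrank_range_of_inj hg).symm
    _ ≤ finrank R (R ∙ root (X ^ 2 : R[X])) := Submodule.finrank_mono hrange
    _ ≤ 1 := by simpa using finrank_span_le_card (R := R) {root (X ^ 2 : R[X])}

end AdjoinRoot

/-- For `C = ℤ[τ]/(τ²)` and `M = ℤ² ` with `τ` acting as zero
(encoded by the `ℤ`-algebra map `φ : C → End_ℤ(ℤ²)` with `φ(τ) = 0`), the module `M`
is traceable (every `z : C` has the same trace on `M` as on `C`), but `M` is not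
isomorphic as a `C`-module to any ideal of `C`. -/
theorem zero_form_module_traceable_not_an_ideal :
    ∃ φ : AdjoinRoot (X ^ 2 : ℤ[X]) →ₐ[ℤ] Module.End ℤ (Fin 2 → ℤ),
      φ (AdjoinRoot.root _) = 0 ∧
      (∀ z : AdjoinRoot (X ^ 2 : ℤ[X]),
        LinearMap.trace ℤ (Fin 2 → ℤ) (φ z) =
          LinearMap.trace ℤ (AdjoinRoot (X ^ 2 : ℤ[X])) (LinearMap.mulLeft ℤ z)) ∧
      ¬ ∃ (I : Ideal (AdjoinRoot (X ^ 2 : ℤ[X]))) (e : (Fin 2 → ℤ) ≃ₗ[ℤ] I),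
          ∀ (z : AdjoinRoot (X ^ 2 : ℤ[X])) (m : Fin 2 → ℤ),
            e (φ z m) = z • (e m) := by
  set ε : AdjoinRoot (X ^ 2 : ℤ[X]) →ₐ[ℤ] ℤ :=
    AdjoinRoot.liftAlgHom _ (AlgHom.id ℤ ℤ) 0 (by simp)
  have hε : ε (AdjoinRoot.root _) = 0 := AdjoinRoot.liftAlgHom_root ..
  refine ⟨(Algebra.ofId ℤ _).comp ε, by simp [hε], fun z => ?_, ?_⟩
  · obtain ⟨a, y, rfl⟩ := AdjoinRoot.exists_eq_of_add_root_mul z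
    have hεz : ε (AdjoinRoot.of _ a + AdjoinRoot.root _ * y) = a := by
      rw [map_add, map_mul, hε, zero_mul, add_zero, AdjoinRoot.liftAlgHom_of, AlgHom.id_apply]
    change _ = Algebra.trace ℤ _ _
    rw [AlgHom.comp_apply, hεz, Algebra.ofId_apply, algebraMap_end_eq_smul_id, map_smul,
      LinearMap.trace_id, finrank_fin_fun, AdjoinRoot.trace_of_add_root_mul, smul_eq_mul,
      mul_comm, Nat.cast_ofNat]
  · rintro ⟨I, e, he⟩
    have hτ (m : Fin 2 → ℤ) :
        AdjoinRoot.root _ * (I.subtype.restrictScalars ℤ ∘ₗ e.toLinearMap) m = 0 := by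
      simpa [hε] using congrArg Subtype.val (he (AdjoinRoot.root _) m).symm
    have hrank := AdjoinRoot.finrank_le_one_of_injective_of_root_mul_eq_zero
      (Subtype.val_injective.comp e.injective) hτ
    rw [finrank_fin_fun] at hrank
    omega
end
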